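/- arXiv:1708.07818 — 5 statements merged into one kernel-verified Lean document; each statement's English description precedes it below -/
import Mathlib

section
/- Let Γ be a finite simple graph on a vertex set S and let 𝕁 be a finite family of proper subsets of S such that: (i) for every J ∈ 𝕁 the induced subgraph of Γ on J is connected and, for every clique C of Γ with C ⊆ J, the induced subgraph of Γ on J ∖ C is preconnected; and (ii) for all distinct J₁, J₂ ∈ 𝕁 the intersection J₁ ∩ J₂ is a clique of Γ (possibly empty). Suppose J₀ ∈ 𝕁 and L ⊆ J₀ is a set such that L separates Γ. Then there exist subsets S₁, S₂ ⊆ S such that: S₁ ≠ S and S₂ ≠ S; S₁ ∪ S₂ = S; every edge of Γ has both endpoints in S₁ or both endpoints in S₂; S₁ ∩ S₂ ⊆ J₀; and every J ∈ 𝕁 satisfies J ⊆ S₁ or J ⊆ S₂. -/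
/-- Reachability in an induced subgraph is preserved under enlarging the vertex set. -/
lemma induce_reachable_mono {V : Type*} (Γ : SimpleGraph V) {T U : Set V} (hTU : T ⊆ U)
    {a b : T} (h : (Γ.induce T).Reachable a b) :
    (Γ.induce U).Reachable ⟨a, hTU a.2⟩ ⟨b, hTU b.2⟩ := by
  let f : Γ.induce T →g Γ.induce U :=
    ⟨fun x => ⟨x.1, hTU x.2⟩, fun {x y} hxy => hxy⟩
  exact h.map f

/-- Lemma 3.3 (le1) of Haulmark–Nguyen–Tran, in graph-theoretic form.
`Γ` is a finite simple graph on the vertex set `V`, `𝕁` a finite family of proper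
vertex subsets whose induced subgraphs are connected with no separating clique
(so that the special subgroups `G_J` are one-ended), with pairwise clique
intersections.  If some subset `L` of a member `J₀` separates `Γ`, then `Γ`
decomposes as a union of two proper induced subgraphs meeting inside `J₀`,
with every member of `𝕁` on one side. -/
theorem visual_decomposition_along_peripheral_subgraph
    {V : Type*} [Fintype V] (Γ : SimpleGraph V) (𝕁 : Finset (Set V))
    (hproper : ∀ J ∈ 𝕁, J ≠ Set.univ)
    (hconn : ∀ J ∈ 𝕁, (Γ.induce J).Connected ∧
      ∀ C : Set V, Γ.IsClique C → C ⊆ J → (Γ.induce ((J \ C : Set V))).Preconnected)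
    (hint : ∀ J₁ ∈ 𝕁, ∀ J₂ ∈ 𝕁, J₁ ≠ J₂ → Γ.IsClique (J₁ ∩ J₂))
    (J₀ : Set V) (hJ₀ : J₀ ∈ 𝕁) (L : Set V) (hLJ₀ : L ⊆ J₀)
    (hLne : (Lᶜ : Set V).Nonempty)
    (hLsep : ¬ (Γ.induce (Lᶜ : Set V)).Preconnected) :
    ∃ S₁ S₂ : Set V, S₁ ≠ Set.univ ∧ S₂ ≠ Set.univ ∧ S₁ ∪ S₂ = Set.univ ∧
      (∀ ⦃x y : V⦄, Γ.Adj x y → (x ∈ S₁ ∧ y ∈ S₁) ∨ (x ∈ S₂ ∧ y ∈ S₂)) ∧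
      S₁ ∩ S₂ ⊆ J₀ ∧ ∀ J ∈ 𝕁, J ⊆ S₁ ∨ J ⊆ S₂ := by
  -- pick a vertex outside `J₀`; it lies in `Lᶜ`
  obtain ⟨v, hv⟩ : ∃ v, v ∉ J₀ := by
    by_contra h
    push_neg at h
    exact hproper J₀ hJ₀ (Set.eq_univ_of_forall h)
  have hvL : v ∈ (Lᶜ : Set V) := fun hvL => hv (hLJ₀ hvL)
  -- `K₀` : the connected component of `v` in the induced graph on `Lᶜ`
  set K₀ : Set V := {x | ∃ hx : x ∈ (Lᶜ : Set V),
    (Γ.induce (Lᶜ : Set V)).Reachable ⟨x, hx⟩ ⟨v, hvL⟩} with hK₀def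
  have hK₀L : K₀ ⊆ (Lᶜ : Set V) := fun x hx => hx.1
  have hvK₀ : v ∈ K₀ := ⟨hvL, SimpleGraph.Reachable.refl _⟩
  -- `K₀` is closed under adjacency within `Lᶜ`
  have hadjK₀ : ∀ x ∈ K₀, ∀ y ∈ (Lᶜ : Set V), Γ.Adj x y → y ∈ K₀ := by
    rintro x ⟨hxL, hxr⟩ y hyL hxy
    refine ⟨hyL, SimpleGraph.Reachable.trans ?_ hxr⟩
    exact SimpleGraph.Adj.reachable (by exact hxy.symm :
      (Γ.induce (Lᶜ : Set V)).Adj ⟨y, hyL⟩ ⟨x, hxL⟩)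
  -- a preconnected subset of `Lᶜ` meeting `K₀` is contained in `K₀`
  have hprecon : ∀ T : Set V, T ⊆ (Lᶜ : Set V) → (Γ.induce T).Preconnected →
      ∀ t ∈ T, t ∈ K₀ → T ⊆ K₀ := by
    intro T hTL hT t ht htK x hx
    have hr := hT ⟨x, hx⟩ ⟨t, ht⟩
    have hr' := induce_reachable_mono Γ hTL hr
    exact ⟨hTL hx, hr'.trans htK.2⟩
  -- `Lᶜ` is not entirely `K₀`
  obtain ⟨w, hwL, hwK⟩ : ∃ w, w ∈ (Lᶜ : Set V) ∧ w ∉ K₀ := by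
    by_contra h
    push_neg at h
    apply hLsep
    intro a b
    have ha : (a : V) ∈ K₀ := h a a.2
    have hb : (b : V) ∈ K₀ := h b b.2
    exact ha.2.trans hb.2.symm
  refine ⟨J₀ ∪ ((Lᶜ : Set V) \ K₀), K₀ ∪ L, ?_, ?_, ?_, ?_, ?_, ?_⟩
  · -- S₁ ≠ univ : v witnesses (v ∉ J₀, v ∈ K₀)
    intro h
    have : v ∈ J₀ ∪ ((Lᶜ : Set V) \ K₀) := h ▸ Set.mem_univ v
    rcases this with h1 | h2
    · exact hv h1
    · exact h2.2 hvK₀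
  · -- S₂ ≠ univ : w witnesses
    intro h
    have : w ∈ K₀ ∪ L := h ▸ Set.mem_univ w
    rcases this with h1 | h2
    · exact hwK h1
    · exact hwL h2
  · -- union is everything
    apply Set.eq_univ_of_forall
    intro x
    by_cases hxL : x ∈ L
    · exact Or.inr (Or.inr hxL)
    · by_cases hxK : x ∈ K₀
      · exact Or.inr (Or.inl hxK)
      · exact Or.inl (Or.inr ⟨hxL, hxK⟩)
  · -- edges
    intro x y hxy
    by_cases hxK : x ∈ K₀
    · refine Or.inr ⟨Or.inl hxK, ?_⟩
      by_cases hyL : y ∈ L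
      · exact Or.inr hyL
      · exact Or.inl (hadjK₀ x hxK y hyL hxy)
    · by_cases hyK : y ∈ K₀
      · refine Or.inr ⟨?_, Or.inl hyK⟩
        by_cases hxL : x ∈ L
        · exact Or.inr hxL
        · exact Or.inl (hadjK₀ y hyK x hxL hxy.symm)
      · refine Or.inl ⟨?_, ?_⟩
        · by_cases hxL : x ∈ L
          · exact Or.inl (hLJ₀ hxL)
          · exact Or.inr ⟨hxL, hxK⟩
        · by_cases hyL : y ∈ L
          · exact Or.inl (hLJ₀ hyL)
          · exact Or.inr ⟨hyL, hyK⟩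
  · -- intersection inside J₀
    rintro x ⟨hx1, hx2⟩
    rcases hx1 with h1 | h1
    · exact h1
    · rcases hx2 with h2 | h2
      · exact absurd h2 h1.2
      · exact hLJ₀ h2
  · -- each J on one side
    intro J hJ
    by_cases hJJ₀ : J = J₀
    · subst hJJ₀
      left
      intro x hx
      exact Or.inl hx
    · -- J ≠ J₀ : J ∩ L is a clique inside J, so J \ L is preconnected
      have hclique : Γ.IsClique (J ∩ L) :=
        (hint J hJ J₀ hJ₀ hJJ₀).subset (Set.inter_subset_inter_right J hLJ₀)
      have hdiff : J \ (J ∩ L) = J \ L := Set.diff_self_inter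
      have hpre : (Γ.induce ((J \ L : Set V))).Preconnected := by
        have := (hconn J hJ).2 (J ∩ L) hclique Set.inter_subset_left
        rwa [hdiff] at this
      have hJLsub : (J \ L : Set V) ⊆ (Lᶜ : Set V) := fun x hx => hx.2
      by_cases hmeet : ∃ t ∈ (J \ L : Set V), t ∈ K₀
      · -- J \ L ⊆ K₀, so J ⊆ K₀ ∪ L
        obtain ⟨t, ht, htK⟩ := hmeet
        right
        intro x hx
        by_cases hxL : x ∈ L
        · exact Or.inr hxL
        · exact Or.inl (hprecon _ hJLsub hpre t ht htK ⟨hx, hxL⟩)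
      · -- J \ L disjoint from K₀, so J ⊆ J₀ ∪ (Lᶜ \ K₀)
        push_neg at hmeet
        left
        intro x hx
        by_cases hxL : x ∈ L
        · exact Or.inl (hLJ₀ hxL)
        · exact Or.inr ⟨hxL, hmeet x ⟨hx, hxL⟩⟩
end

section
/- Let X be a topological space, let U and V be disjoint open subsets of X, and set σ = X ∖ (U ∪ V). Let A, B ⊆ X satisfy σ ⊆ A, σ ⊆ B, A ∖ σ ⊆ U and B ∖ σ ⊆ V, and set Δ = A ∪ B. Then for every point x ∈ X ∖ Δ, the connected component of x in the set X ∖ Δ equals the connected component of x in the set X ∖ A or it equals the connected component of x in the set X ∖ B. -/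
lemma region_aux {X : Type*} [TopologicalSpace X] {U V A B : Set X}
    (hU : IsOpen U) (hV : IsOpen V) (hUV : Disjoint U V)
    (hA : Aᶜ ⊆ U ∪ V) (hBA : B ∩ Aᶜ ⊆ V)
    {x : X} (hxA : x ∉ A) (hxU : x ∈ U) :
    connectedComponentIn (A ∪ B)ᶜ x = connectedComponentIn Aᶜ x := by
  apply subset_antisymm
  · exact connectedComponentIn_mono _ (Set.compl_subset_compl.2 Set.subset_union_left)
  · have hC := isPreconnected_connectedComponentIn (x := x) (F := Aᶜ)
    have hCA := connectedComponentIn_subset Aᶜ x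
    have hxC : x ∈ connectedComponentIn Aᶜ x := mem_connectedComponentIn hxA
    have hCU : connectedComponentIn Aᶜ x ⊆ U :=
      hC.subset_left_of_subset_union hU hV hUV (hCA.trans hA) ⟨x, hxC, hxU⟩
    refine hC.subset_connectedComponentIn hxC ?_
    intro y hy
    simp only [Set.mem_compl_iff, Set.mem_union]
    rintro (h | h)
    · exact hCA hy h
    · exact Set.disjoint_left.1 hUV (hCU hy) (hBA ⟨h, hCA hy⟩)

/-- Topological form of Lemma (tt): if `(A, B)` is a "strong visual decomposition" of
`Δ = A ∪ B` along `σ = X ∖ (U ∪ V)`, where `U, V` are disjoint open sets with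
`A ∖ σ ⊆ U` and `B ∖ σ ⊆ V`, then every connected component ("region") of `X ∖ Δ`
is a component of `X ∖ A` or of `X ∖ B`. -/
theorem region_of_complement_of_union
    {X : Type*} [TopologicalSpace X] (U V : Set X)
    (hU : IsOpen U) (hV : IsOpen V) (hUV : Disjoint U V)
    (σ A B Δ : Set X) (hσ : σ = (U ∪ V)ᶜ)
    (hσA : σ ⊆ A) (hσB : σ ⊆ B) (hAU : A \ σ ⊆ U) (hBV : B \ σ ⊆ V)
    (hΔ : Δ = A ∪ B) :
    ∀ x ∈ Δᶜ, connectedComponentIn Δᶜ x = connectedComponentIn Aᶜ x ∨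
      connectedComponentIn Δᶜ x = connectedComponentIn Bᶜ x := by
  subst hΔ hσ
  intro x hx
  simp only [Set.mem_compl_iff, Set.mem_union, not_or] at hx
  obtain ⟨hxA, hxB⟩ := hx
  have hxUV : x ∈ U ∪ V := by
    by_contra h
    exact hxA (hσA h)
  have hA : Aᶜ ⊆ U ∪ V := fun y hy => by
    by_contra h; exact hy (hσA h)
  have hB : Bᶜ ⊆ V ∪ U := fun y hy => by
    by_contra h; exact hy (hσB (by simpa [or_comm] using h))
  have hBA : B ∩ Aᶜ ⊆ V := fun y ⟨hyB, hyA⟩ =>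
    hBV ⟨hyB, fun hyσ => hyA (hσA hyσ)⟩
  have hAB : A ∩ Bᶜ ⊆ U := fun y ⟨hyA, hyB⟩ =>
    hAU ⟨hyA, fun hyσ => hyB (hσB hyσ)⟩
  rcases hxUV with hxU | hxV
  · exact Or.inl (region_aux hU hV hUV hA hBA hxA hxU)
  · right
    rw [Set.union_comm]
    exact region_aux hV hU hUV.symm hB hAB hxB hxV
end

section
/- Let f : X → Y be a quotient map between topological spaces such that for every y ∈ Y the fiber f⁻¹({y}) is preconnected. Let S ⊆ X be a closed set with f⁻¹(f(S)) = S. Then the set X ∖ S is preconnected if and only if the set Y ∖ f(S) is preconnected. -/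
open Set

/-- If `f : X → Y` is a quotient map with preconnected fibers and `S ⊆ X` is a closed
saturated set, then `X ∖ S` is preconnected iff `Y ∖ f(S)` is preconnected.  This is
the topological step used for Theorem 1.2 (intro2) and Proposition (pi1), where the
Bowditch boundary is obtained from the CAT(0) boundary by collapsing the connected
limit sets of peripheral cosets. -/
theorem preconnected_compl_iff_of_quotientMap
    {X Y : Type*} [TopologicalSpace X] [TopologicalSpace Y]
    (f : X → Y) (hf : Topology.IsQuotientMap f)
    (hfib : ∀ y : Y, IsPreconnected (f ⁻¹' {y}))
    (S : Set X) (hS : IsClosed S) (hsat : f ⁻¹' (f '' S) = S) :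
    IsPreconnected Sᶜ ↔ IsPreconnected ((f '' S)ᶜ) := by
  have hsurj : Function.Surjective f := hf.surjective
  -- the complement of S is the preimage of the complement of f '' S
  have hpre : f ⁻¹' (f '' S)ᶜ = Sᶜ := by rw [preimage_compl, hsat]
  have himg : f '' Sᶜ = (f '' S)ᶜ := by
    apply Subset.antisymm
    · rintro _ ⟨x, hx, rfl⟩ hmem
      exact hx (by rw [← hsat]; exact hmem)
    · intro y hy
      obtain ⟨x, rfl⟩ := hsurj y
      exact ⟨x, fun hxS => hy (mem_image_of_mem f hxS), rfl⟩
  constructor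
  · intro h
    rw [← himg]
    exact h.image f hf.continuous.continuousOn
  · intro h
    rw [← hpre]
    intro u v hu hv hsub ⟨a, ha, hau⟩ ⟨b, hb, hbv⟩
    by_contra hne
    rw [not_nonempty_iff_eq_empty] at hne
    have hfibsub : ∀ y ∈ (f '' S)ᶜ, f ⁻¹' {y} ⊆ f ⁻¹' (f '' S)ᶜ := by
      intro y hy x hx
      rw [mem_preimage, mem_singleton_iff] at hx
      rw [mem_preimage, hx]; exact hy
    -- every fiber over (f '' S)ᶜ lies entirely in u or entirely in v
    have hfiber : ∀ y ∈ (f '' S)ᶜ, f ⁻¹' {y} ⊆ u ∨ f ⁻¹' {y} ⊆ v := by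
      intro y hy
      have hysub : f ⁻¹' {y} ⊆ u ∪ v := (hfibsub y hy).trans hsub
      by_cases hcu : (f ⁻¹' {y} ∩ u).Nonempty
      · left
        intro x hx
        by_contra hxu
        have hxv : x ∈ v := (hysub hx).resolve_left hxu
        obtain ⟨z, hz, hzu, hzv⟩ := hfib y u v hu hv hysub hcu ⟨x, hx, hxv⟩
        have : z ∈ f ⁻¹' (f '' S)ᶜ ∩ (u ∩ v) := ⟨hfibsub y hy hz, hzu, hzv⟩
        rw [hne] at this; exact this
      · right
        intro x hx
        refine (hysub hx).resolve_left fun hxu => hcu ⟨x, hx, hxu⟩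
    set U : Set Y := {y | y ∈ (f '' S)ᶜ ∧ f ⁻¹' {y} ⊆ u} with hU
    set V : Set Y := {y | y ∈ (f '' S)ᶜ ∧ f ⁻¹' {y} ⊆ v} with hV
    have hpreU : f ⁻¹' U = Sᶜ ∩ u := by
      ext x
      constructor
      · rintro ⟨hx1, hx2⟩
        exact ⟨by rw [← hpre]; exact hx1, hx2 rfl⟩
      · rintro ⟨hx1, hx2⟩
        have hx1' : f x ∈ (f '' S)ᶜ := by rwa [← mem_preimage, hpre]
        refine ⟨hx1', (hfiber _ hx1').resolve_right fun hsv => ?_⟩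
        have : x ∈ f ⁻¹' (f '' S)ᶜ ∩ (u ∩ v) := ⟨by rwa [hpre], hx2, hsv rfl⟩
        rw [hne] at this; exact this
    have hpreV : f ⁻¹' V = Sᶜ ∩ v := by
      ext x
      constructor
      · rintro ⟨hx1, hx2⟩
        exact ⟨by rw [← hpre]; exact hx1, hx2 rfl⟩
      · rintro ⟨hx1, hx2⟩
        have hx1' : f x ∈ (f '' S)ᶜ := by rwa [← mem_preimage, hpre]
        refine ⟨hx1', (hfiber _ hx1').resolve_left fun hsu => ?_⟩
        have : x ∈ f ⁻¹' (f '' S)ᶜ ∩ (u ∩ v) := ⟨by rwa [hpre], hsu rfl, hx2⟩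
        rw [hne] at this; exact this
    have hUopen : IsOpen U := by
      rw [hf.isOpen_preimage.symm, hpreU]
      exact (hS.isOpen_compl).inter hu
    have hVopen : IsOpen V := by
      rw [hf.isOpen_preimage.symm, hpreV]
      exact (hS.isOpen_compl).inter hv
    have hcover : (f '' S)ᶜ ⊆ U ∪ V := by
      intro y hy
      rcases hfiber y hy with h1 | h1
      · exact Or.inl ⟨hy, h1⟩
      · exact Or.inr ⟨hy, h1⟩
    have haU : f a ∈ (f '' S)ᶜ ∩ U := by
      have : a ∈ f ⁻¹' U := by rw [hpreU]; exact ⟨hpre ▸ ha, hau⟩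
      exact ⟨this.1, this⟩
    have hbV : f b ∈ (f '' S)ᶜ ∩ V := by
      have : b ∈ f ⁻¹' V := by rw [hpreV]; exact ⟨hpre ▸ hb, hbv⟩
      exact ⟨this.1, this⟩
    obtain ⟨y, hy, hyU, hyV⟩ := h U V hUopen hVopen hcover ⟨f a, haU⟩ ⟨f b, hbV⟩
    obtain ⟨x, rfl⟩ := hsurj y
    have : x ∈ f ⁻¹' (f '' S)ᶜ ∩ (u ∩ v) := ⟨hy, hyU.2 rfl, hyV.2 rfl⟩
    rw [hne] at this; exact this
end

section
/- Let Γ be a simple graph on a vertex set S and let 𝕁 be a family of subsets of S satisfying: (1) every induced 4-cycle of Γ has its vertex set contained in some J ∈ 𝕁; (2) for all distinct J₁, J₂ ∈ 𝕁, the intersection J₁ ∩ J₂ is a clique of Γ; (3) for every J ∈ 𝕁, every vertex s ∈ S adjacent to two non-adjacent vertices both lying in J belongs to J. Let u and v be distinct non-adjacent vertices such that no J ∈ 𝕁 contains both u and v, let σ = {w ∈ S : w is adjacent to both u and v}, and set K̄ = σ ∪ {u, v}. Then the family 𝕁 ∪ {K̄} also satisfies conditions (1), (2) and (3). -/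
/-- `a, b, c, d` form an induced 4-cycle of `Γ`: they are four distinct vertices,
`ab`, `bc`, `cd`, `da` are edges, and the diagonals `ac`, `bd` are non-edges. -/
def SimpleGraph.IsInducedFourCycle {V : Type*} (Γ : SimpleGraph V) (a b c d : V) : Prop :=
  a ≠ b ∧ a ≠ c ∧ a ≠ d ∧ b ≠ c ∧ b ≠ d ∧ c ≠ d ∧
    Γ.Adj a b ∧ Γ.Adj b c ∧ Γ.Adj c d ∧ Γ.Adj d a ∧ ¬ Γ.Adj a c ∧ ¬ Γ.Adj b d

/-- Caprace's combinatorial conditions (Theorem `th1` in the paper) on a family `𝕁` of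
vertex subsets, equivalent to `G_Γ` being hyperbolic relative to `{G_J : J ∈ 𝕁}`:
(1) every induced 4-cycle lies in some `J ∈ 𝕁`;
(2) distinct members of `𝕁` intersect in cliques;
(3) a vertex adjacent to two non-adjacent vertices of some `J ∈ 𝕁` lies in `J`. -/
def SimpleGraph.CapraceConditions {V : Type*} (Γ : SimpleGraph V) (𝕁 : Set (Set V)) : Prop :=
  (∀ a b c d : V, Γ.IsInducedFourCycle a b c d → ∃ J ∈ 𝕁, ({a, b, c, d} : Set V) ⊆ J) ∧
    (∀ J₁ ∈ 𝕁, ∀ J₂ ∈ 𝕁, J₁ ≠ J₂ → Γ.IsClique (J₁ ∩ J₂)) ∧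
    (∀ J ∈ 𝕁, ∀ s x y : V, x ∈ J → y ∈ J → x ≠ y → ¬ Γ.Adj x y →
      Γ.Adj s x → Γ.Adj s y → s ∈ J)

/-- The claim verified in the proof of Proposition (pi1): adjoining the complete
subgraph suspension `K̄ = σ ∗ {u, v}` to a peripheral structure `𝕁` satisfying
Caprace's conditions again yields a family satisfying Caprace's conditions. -/
theorem capraceConditions_insert_suspension
    {V : Type*} (Γ : SimpleGraph V) (𝕁 : Set (Set V))
    (h𝕁 : Γ.CapraceConditions 𝕁)
    (u v : V) (huv : u ≠ v) (hnadj : ¬ Γ.Adj u v)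
    (hno : ∀ J ∈ 𝕁, ¬ (u ∈ J ∧ v ∈ J))
    (σ Kbar : Set V) (hσ : σ = {w : V | Γ.Adj w u ∧ Γ.Adj w v})
    (hK : Kbar = σ ∪ {u, v}) :
    Γ.CapraceConditions (insert Kbar 𝕁) := by
  subst hσ hK
  obtain ⟨h1, h2, h3⟩ := h𝕁
  have key : ∀ a b : V, a ∈ ({w : V | Γ.Adj w u ∧ Γ.Adj w v} : Set V) →
      b ∈ ({w : V | Γ.Adj w u ∧ Γ.Adj w v} : Set V) → a ≠ b → ¬ Γ.Adj a b → False := by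
    intro a b ha hb hab hnab
    obtain ⟨hau, hav⟩ := ha
    obtain ⟨hbu, hbv⟩ := hb
    have hc : Γ.IsInducedFourCycle a u b v :=
      ⟨hau.ne, hab, hav.ne, hbu.ne.symm, huv, hbv.ne, hau, hbu.symm, hbv, hav.symm, hnab, hnadj⟩
    obtain ⟨J, hJ, hsub⟩ := h1 a u b v hc
    exact hno J hJ ⟨hsub (by simp), hsub (by simp)⟩
  have keyK : ∀ a b : V, a ∈ ({w : V | Γ.Adj w u ∧ Γ.Adj w v} ∪ {u, v} : Set V) →
      b ∈ ({w : V | Γ.Adj w u ∧ Γ.Adj w v} ∪ {u, v} : Set V) → a ≠ b → ¬ Γ.Adj a b →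
      (a = u ∧ b = v) ∨ (a = v ∧ b = u) := by
    intro a b ha hb hab hnab
    rcases ha with ha | ha
    · rcases hb with hb | hb
      · exact (key a b ha hb hab hnab).elim
      · rcases hb with rfl | rfl
        · exact absurd ha.1 hnab
        · exact absurd ha.2 hnab
    · rcases hb with hb | hb
      · rcases ha with rfl | rfl
        · exact absurd hb.1.symm hnab
        · exact absurd hb.2.symm hnab
      · rcases ha with rfl | rfl <;> rcases hb with rfl | rfl
        · exact absurd rfl hab
        · exact Or.inl ⟨rfl, rfl⟩
        · exact Or.inr ⟨rfl, rfl⟩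
        · exact absurd rfl hab
  refine ⟨?_, ?_, ?_⟩
  · intro a b c d hc
    obtain ⟨J, hJ, hs⟩ := h1 a b c d hc
    exact ⟨J, Set.mem_insert_of_mem _ hJ, hs⟩
  · intro J₁ hJ₁ J₂ hJ₂ hne
    rcases hJ₁ with rfl | hJ₁ <;> rcases hJ₂ with rfl | hJ₂
    · exact absurd rfl hne
    · intro a ha b hb hab
      by_contra hnab
      rcases keyK a b ha.1 hb.1 hab hnab with ⟨rfl, rfl⟩ | ⟨rfl, rfl⟩
      · exact hno J₂ hJ₂ ⟨ha.2, hb.2⟩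
      · exact hno J₂ hJ₂ ⟨hb.2, ha.2⟩
    · intro a ha b hb hab
      by_contra hnab
      rcases keyK a b ha.2 hb.2 hab hnab with ⟨rfl, rfl⟩ | ⟨rfl, rfl⟩
      · exact hno J₁ hJ₁ ⟨ha.1, hb.1⟩
      · exact hno J₁ hJ₁ ⟨hb.1, ha.1⟩
    · exact h2 J₁ hJ₁ J₂ hJ₂ hne
  · intro J hJ s x y hx hy hxy hnab hsx hsy
    rcases hJ with rfl | hJ
    · rcases keyK x y hx hy hxy hnab with ⟨rfl, rfl⟩ | ⟨rfl, rfl⟩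
      · exact Set.mem_union_left _ ⟨hsx, hsy⟩
      · exact Set.mem_union_left _ ⟨hsy, hsx⟩
    · exact h3 J hJ s x y hx hy hxy hnab hsx hsy
end

section
/- Let Γ be a simple graph and let α₁ and α₂ be two distinct induced 4-cycles of Γ whose intersection contains two non-adjacent vertices u and v. Then there exist three distinct vertices x₁, x₂, x₃ of α₁ ∪ α₂, all distinct from u and v, such that each xᵢ is adjacent to both u and v, and x₁ is not adjacent to x₂. In particular, the induced subgraph of Γ on {u, v, x₁, x₂, x₃} is the join of the non-adjacent pair {u, v} with a 3-vertex graph that is not a triangle. -/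
/-- `α` is (the vertex set of) an induced 4-cycle of `Γ`. -/
def SimpleGraph.IsInducedFourCycleSet {V : Type*} (Γ : SimpleGraph V) (α : Set V) : Prop :=
  ∃ a b c d : V, Γ.IsInducedFourCycle a b c d ∧ α = {a, b, c, d}

lemma diag_aux {V : Type*} (Γ : SimpleGraph V) (a b c d u v : V)
    (h : Γ.IsInducedFourCycle a b c d)
    (hu : u ∈ ({a, b, c, d} : Set V)) (hv : v ∈ ({a, b, c, d} : Set V))
    (huv : u ≠ v) (hn : ¬ Γ.Adj u v) :
    ∃ p q : V, p ≠ q ∧ p ≠ u ∧ p ≠ v ∧ q ≠ u ∧ q ≠ v ∧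
      Γ.Adj p u ∧ Γ.Adj p v ∧ Γ.Adj q u ∧ Γ.Adj q v ∧ ¬ Γ.Adj p q ∧
      ({a, b, c, d} : Set V) = {u, v, p, q} := by
  obtain ⟨hab, hac, had, hbc, hbd, hcd, Aab, Abc, Acd, Ada, Nac, Nbd⟩ := h
  simp only [Set.mem_insert_iff, Set.mem_singleton_iff] at hu hv
  rcases hu with rfl | rfl | rfl | rfl <;> rcases hv with rfl | rfl | rfl | rfl <;>
    first
      | exact absurd rfl huv
      | exact absurd Aab hn
      | exact absurd Aab.symm hn
      | exact absurd Abc hn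
      | exact absurd Abc.symm hn
      | exact absurd Acd hn
      | exact absurd Acd.symm hn
      | exact absurd Ada hn
      | exact absurd Ada.symm hn
      | (refine ⟨b, d, hbd, hab.symm, hbc, had.symm, hcd.symm, Aab.symm, Abc, Ada, Acd.symm, Nbd, ?_⟩
         ext x; simp; tauto)
      | (refine ⟨b, d, hbd, hbc, hab.symm, hcd.symm, had.symm, Abc, Aab.symm, Acd.symm, Ada, Nbd, ?_⟩
         ext x; simp; tauto)
      | (refine ⟨a, c, hac, hab, had, hbc.symm, hcd, Aab, Ada.symm, Abc.symm, Acd, Nac, ?_⟩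
         ext x; simp; tauto)
      | (refine ⟨a, c, hac, had, hab, hcd, hbc.symm, Ada.symm, Aab, Acd, Abc.symm, Nac, ?_⟩
         ext x; simp; tauto)


/-- Combinatorial core of Lemma (for rel): if two distinct induced 4-cycles `α₁, α₂` of
`Γ` share two non-adjacent vertices `u, v`, then `α₁ ∪ α₂` contains three distinct
vertices `x₁, x₂, x₃`, all distinct from `u` and `v`, each adjacent to both `u` and `v`,
with `x₁` not adjacent to `x₂`; i.e. the induced subgraph on `{u, v, x₁, x₂, x₃}` is the
join of the non-adjacent pair `{u, v}` with a 3-vertex graph that is not a triangle. -/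
theorem two_fourCycles_sharing_nonadjacent_pair
    {V : Type*} (Γ : SimpleGraph V) (α₁ α₂ : Set V)
    (h₁ : Γ.IsInducedFourCycleSet α₁) (h₂ : Γ.IsInducedFourCycleSet α₂)
    (hne : α₁ ≠ α₂) (u v : V) (hu : u ∈ α₁ ∩ α₂) (hv : v ∈ α₁ ∩ α₂)
    (huv : u ≠ v) (hnadj : ¬ Γ.Adj u v) :
    ∃ x₁ x₂ x₃ : V, x₁ ∈ α₁ ∪ α₂ ∧ x₂ ∈ α₁ ∪ α₂ ∧ x₃ ∈ α₁ ∪ α₂ ∧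
      x₁ ≠ x₂ ∧ x₁ ≠ x₃ ∧ x₂ ≠ x₃ ∧
      x₁ ≠ u ∧ x₁ ≠ v ∧ x₂ ≠ u ∧ x₂ ≠ v ∧ x₃ ≠ u ∧ x₃ ≠ v ∧
      Γ.Adj x₁ u ∧ Γ.Adj x₁ v ∧ Γ.Adj x₂ u ∧ Γ.Adj x₂ v ∧ Γ.Adj x₃ u ∧ Γ.Adj x₃ v ∧
      ¬ Γ.Adj x₁ x₂ := by
  obtain ⟨a₁, b₁, c₁, d₁, hc₁, rfl⟩ := h₁
  obtain ⟨a₂, b₂, c₂, d₂, hc₂, rfl⟩ := h₂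
  obtain ⟨p₁, q₁, hpq₁, hpu₁, hpv₁, hqu₁, hqv₁, Apu₁, Apv₁, Aqu₁, Aqv₁, Npq₁, e₁⟩ :=
    diag_aux Γ a₁ b₁ c₁ d₁ u v hc₁ hu.1 hv.1 huv hnadj
  obtain ⟨p₂, q₂, hpq₂, hpu₂, hpv₂, hqu₂, hqv₂, Apu₂, Apv₂, Aqu₂, Aqv₂, Npq₂, e₂⟩ :=
    diag_aux Γ a₂ b₂ c₂ d₂ u v hc₂ hu.2 hv.2 huv hnadj
  have hp₁ : p₁ ∈ ({a₁, b₁, c₁, d₁} : Set V) ∪ {a₂, b₂, c₂, d₂} := by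
    left; rw [e₁]; simp
  have hq₁ : q₁ ∈ ({a₁, b₁, c₁, d₁} : Set V) ∪ {a₂, b₂, c₂, d₂} := by
    left; rw [e₁]; simp
  have hp₂ : p₂ ∈ ({a₁, b₁, c₁, d₁} : Set V) ∪ {a₂, b₂, c₂, d₂} := by
    right; rw [e₂]; simp
  have hq₂ : q₂ ∈ ({a₁, b₁, c₁, d₁} : Set V) ∪ {a₂, b₂, c₂, d₂} := by
    right; rw [e₂]; simp
  by_cases hp : p₂ ≠ p₁ ∧ p₂ ≠ q₁
  · exact ⟨p₁, q₁, p₂, hp₁, hq₁, hp₂, hpq₁, (Ne.symm hp.1), (Ne.symm hp.2),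
      hpu₁, hpv₁, hqu₁, hqv₁, hpu₂, hpv₂, Apu₁, Apv₁, Aqu₁, Aqv₁, Apu₂, Apv₂, Npq₁⟩
  by_cases hq : q₂ ≠ p₁ ∧ q₂ ≠ q₁
  · exact ⟨p₁, q₁, q₂, hp₁, hq₁, hq₂, hpq₁, (Ne.symm hq.1), (Ne.symm hq.2),
      hpu₁, hpv₁, hqu₁, hqv₁, hqu₂, hqv₂, Apu₁, Apv₁, Aqu₁, Aqv₁, Aqu₂, Aqv₂, Npq₁⟩
  exfalso
  push_neg at hp hq
  apply hne
  rw [e₁, e₂]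
  by_cases h : p₂ = p₁
  · have h2 : q₂ = q₁ := by
      by_cases h' : q₂ = p₁
      · exact absurd (h.trans h'.symm) hpq₂
      · exact hq h'
    subst h h2; rfl
  · have hpq : p₂ = q₁ := hp h
    have hqp : q₂ = p₁ := by
      by_cases h' : q₂ = p₁
      · exact h'
      · exact absurd (hpq.trans (hq h').symm) hpq₂
    subst hpq hqp
    ext x; simp; tauto
end
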